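/- Let G₁,…,G_n be finite connected simple graphs. Then the Wiener index of their Cartesian product satisfies W(G₁□⋯□G_n) = ∑_{i=1}^n ( W(G_i) · ∏_{j≠i} |G_j|² ). -/

import Mathlib

open SimpleGraph Finset

/-- The number of shortest `u`-`v` paths (geodesics) in `G`:
the number of paths from `u` to `v` whose length equals the distance `d_G(u,v)`. -/
noncomputable def geodesicCount {V : Type*} (G : SimpleGraph V) (u v : V) : ℕ :=
  Nat.card {p : G.Walk u v // p.IsPath ∧ p.length = G.dist u v}

/-- The number of shortest `u`-`v` paths in `G` that pass through the vertex `x`. -/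
noncomputable def geodesicCountThrough {V : Type*} (G : SimpleGraph V) (u v x : V) : ℕ :=
  Nat.card {p : G.Walk u v // p.IsPath ∧ p.length = G.dist u v ∧ x ∈ p.support}

/-- The Wiener index of `G`: the sum of the distances over all unordered pairs of
vertices (the diagonal contributes `0`, hence the factor `1/2` over ordered pairs). -/
noncomputable def wiener {V : Type*} [Fintype V] (G : SimpleGraph V) : ℚ :=
  (1 / 2) * ∑ u, ∑ v, (G.dist u v : ℚ)

/-- The Cartesian (box) product of a family of graphs: two tuples are adjacent iff
they agree in all but one coordinate and differ by an edge in that coordinate. -/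
def boxProdPi {ι : Type*} {V : ι → Type*} (G : ∀ i, SimpleGraph (V i)) :
    SimpleGraph (∀ i, V i) where
  Adj u v := ∃ i, (G i).Adj (u i) (v i) ∧ ∀ j, j ≠ i → u j = v j
  symm := by
    constructor
    rintro u v ⟨i, hadj, heq⟩
    exact ⟨i, hadj.symm, fun j hj => (heq j hj).symm⟩
  loopless := by
    constructor
    rintro u ⟨i, hadj, -⟩
    exact (G i).loopless.irrefl _ hadj

/-!
Distances in a box product add up over the coordinates: every edge of the product changes a
single coordinate by one edge, and conversely geodesics in the factors can be traversed one
coordinate after the other. Summing over all pairs of tuples, the `i`-th coordinate sees each pair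
`(a, b)` of vertices of `Gᵢ` exactly `(∏_{j ≠ i} |Gⱼ|)²` times.
-/

namespace SimpleGraph

variable {ι : Type*} {V : ι → Type*} (G : ∀ i, SimpleGraph (V i))

def boxProdPiUpdate [DecidableEq ι] (u : ∀ i, V i) (i : ι) : G i →g boxProdPi G where
  toFun a := Function.update u i a
  map_rel' h := ⟨i, by simpa using h, fun j hj => by simp [Function.update_of_ne hj]⟩

theorem boxProdPi_exists_walk_update [DecidableEq ι] (v : ∀ i, V i) {i : ι} {a : V i}
    (h : (G i).Reachable a (v i)) :
    ∃ w : (boxProdPi G).Walk (Function.update v i a) v, w.length = (G i).dist a (v i) := by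
  obtain ⟨w, hw⟩ := h.exists_walk_length_eq_dist
  exact ⟨(w.map (boxProdPiUpdate G v i)).copy rfl (Function.update_eq_self i v),
    (Walk.length_copy _ _ _).trans ((Walk.length_map _ _).trans hw)⟩

theorem boxProdPi_exists_walk_length_eq_sum_dist [DecidableEq ι] (hconn : ∀ i, (G i).Connected)
    (s : Finset ι) {u v : ∀ i, V i} (huv : ∀ j ∉ s, u j = v j) :
    ∃ w : (boxProdPi G).Walk u v, w.length = ∑ i ∈ s, (G i).dist (u i) (v i) := by
  induction s using Finset.induction generalizing v with
  | empty =>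
    obtain rfl : u = v := funext fun j => huv j (notMem_empty j)
    exact ⟨.nil, rfl⟩
  | @insert i s hi ih =>
    have hs : ∀ j ∈ s, Function.update v i (u i) j = v j := fun j hj =>
      Function.update_of_ne (ne_of_mem_of_not_mem hj hi) _ _
    obtain ⟨w₁, hw₁⟩ := ih (v := Function.update v i (u i)) fun j hj => by
      obtain rfl | hji := eq_or_ne j i
      · rw [Function.update_self]
      · rw [Function.update_of_ne hji, huv j (by simp [hji, hj])]
    obtain ⟨w₂, hw₂⟩ := boxProdPi_exists_walk_update G v (hconn i (u i) (v i))
    refine ⟨w₁.append w₂, ?_⟩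
    rw [Walk.length_append, hw₁, hw₂, sum_insert hi, add_comm,
      sum_congr rfl fun j hj => by rw [hs j hj]]

variable [Fintype ι]

theorem boxProdPi_sum_dist_eq_one_of_adj {u v : ∀ i, V i}
    (h : (boxProdPi G).Adj u v) : ∑ i, (G i).dist (u i) (v i) = 1 := by
  obtain ⟨i, hadj, heq⟩ := h
  rw [sum_eq_single i (fun j _ hj => by rw [heq j hj, dist_self]) (by simp)]
  exact dist_eq_one_iff_adj.mpr hadj

theorem boxProdPi_sum_dist_le_length (hconn : ∀ i, (G i).Connected) {u v : ∀ i, V i}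
    (w : (boxProdPi G).Walk u v) : ∑ i, (G i).dist (u i) (v i) ≤ w.length := by
  induction w with
  | nil => simp
  | @cons u x v h w ih =>
    calc ∑ i, (G i).dist (u i) (v i)
        ≤ ∑ i, ((G i).dist (u i) (x i) + (G i).dist (x i) (v i)) :=
          sum_le_sum fun i _ => (hconn i).dist_triangle
      _ ≤ 1 + w.length := by rw [sum_add_distrib, boxProdPi_sum_dist_eq_one_of_adj G h]; omega
      _ = (w.cons h).length := by rw [Walk.length_cons, add_comm]

theorem boxProdPi_dist (hconn : ∀ i, (G i).Connected) (u v : ∀ i, V i) :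
    (boxProdPi G).dist u v = ∑ i, (G i).dist (u i) (v i) := by
  classical
  obtain ⟨w, hw⟩ := boxProdPi_exists_walk_length_eq_sum_dist G hconn univ fun j hj =>
    absurd (mem_univ j) hj
  refine le_antisymm (hw ▸ dist_le w) ?_
  obtain ⟨w', hw'⟩ := w.reachable.exists_walk_length_eq_dist
  exact hw' ▸ boxProdPi_sum_dist_le_length G hconn w'

end SimpleGraph

namespace Fintype

variable {ι M : Type*} [Fintype ι] [DecidableEq ι] {V : ι → Type*} [∀ i, Fintype (V i)]
  [AddCommMonoid M]

theorem sum_comp_eval (i : ι) (f : V i → M) :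
    ∑ u : ∀ j, V j, f (u i) = (∏ j ∈ univ.erase i, card (V j)) • ∑ a, f a := by
  classical
  rw [← Finset.sum_fiberwise univ (fun u : ∀ j, V j => u i) (fun u => f (u i)), smul_sum]
  refine Finset.sum_congr rfl fun a _ => ?_
  rw [Finset.sum_congr rfl fun u hu => by rw [(mem_filter.1 hu).2], Finset.sum_const]
  congr 1
  simpa using card_filter_piFinset_eq_of_mem (fun j => (univ : Finset (V j))) i (mem_univ a)

theorem sum_sum_comp_eval (i : ι) (f : V i → V i → M) :
    ∑ u : ∀ j, V j, ∑ v : ∀ j, V j, f (u i) (v i) =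
      (∏ j ∈ univ.erase i, card (V j)) ^ 2 • ∑ a, ∑ b, f a b := by
  calc ∑ u : ∀ j, V j, ∑ v : ∀ j, V j, f (u i) (v i)
      = ∑ u : ∀ j, V j, (∏ j ∈ univ.erase i, card (V j)) • ∑ b, f (u i) b :=
        Finset.sum_congr rfl fun u _ => sum_comp_eval i (f (u i))
    _ = (∏ j ∈ univ.erase i, card (V j)) •
          ((∏ j ∈ univ.erase i, card (V j)) • ∑ a, ∑ b, f a b) := by
        rw [← Finset.smul_sum, sum_comp_eval i fun a => ∑ b, f a b]
    _ = _ := by rw [smul_smul, sq]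

end Fintype

/-- For finite connected graphs `G₁, …, Gₙ`:
`W(G₁ □ ⋯ □ Gₙ) = ∑ᵢ ( W(Gᵢ) · ∏_{j ≠ i} |Gⱼ|² )`. -/
theorem wiener_boxProdPi {n : ℕ} {V : Fin n → Type*} [∀ i, Fintype (V i)]
    (G : ∀ i, SimpleGraph (V i)) (hconn : ∀ i, (G i).Connected) :
    wiener (boxProdPi G) =
      ∑ i, wiener (G i) * ∏ j ∈ Finset.univ.erase i, (Fintype.card (V j) : ℚ) ^ 2 := by
  have hcoord (i : Fin n) : ∑ u : ∀ j, V j, ∑ v : ∀ j, V j, ((G i).dist (u i) (v i) : ℚ) =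
      (∑ a, ∑ b, ((G i).dist a b : ℚ)) *
        ∏ j ∈ univ.erase i, (Fintype.card (V j) : ℚ) ^ 2 := by
    rw [Fintype.sum_sum_comp_eval i fun a b => ((G i).dist a b : ℚ), nsmul_eq_mul, prod_pow,
      Nat.cast_pow, Nat.cast_prod, mul_comm]
  calc wiener (boxProdPi G)
      = 1 / 2 * ∑ u : ∀ j, V j, ∑ v : ∀ j, V j, ∑ i, ((G i).dist (u i) (v i) : ℚ) := by
        simp only [wiener, boxProdPi_dist G hconn, Nat.cast_sum]
    _ = ∑ i, 1 / 2 * ∑ u : ∀ j, V j, ∑ v : ∀ j, V j, ((G i).dist (u i) (v i) : ℚ) := by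
        simp only [sum_comm (γ := Fin n), mul_sum]
    _ = _ := by simp only [hcoord, wiener, mul_assoc]
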